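/- arXiv:2404.01190 — 2 statements merged into one kernel-verified Lean document; each statement's English description precedes it below -/
import Mathlib

section
/- With the setup of the efficient value of information: if additionally φ is strictly convex and the constraint binds at every η, then W is strictly concave on [0, η̄]: for η₁ ≠ η₂ and υ ∈ (0,1), W(υη₁ + (1−υ)η₂) > υW(η₁) + (1−υ)W(η₂). -/
/-!
Take optimal information structures `F₁`, `F₂` at `η₁ ≠ η₂`; the constraint binds, so
`D Fᵢ = ηᵢ`. The mixture `υF₁ + (1-υ)F₂` is Bayes-plausible, has value `υW(η₁) + (1-υ)W(η₂)`,
and, because `D = φ ∘ ∫ c` with `φ` strictly convex and `∫ c` affine in the measure, costs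
strictly less than `υη₁ + (1-υ)η₂`. A plan with slack cannot be optimal (the constraint would
bind), so its value lies strictly below `W(υη₁ + (1-υ)η₂)`.
-/

open MeasureTheory Set

def BayesPlausible {Θ : Type*} [Fintype Θ] (μ : Θ → ℝ) (F : Measure (Θ → ℝ)) : Prop :=
  IsProbabilityMeasure F ∧ (∀ᵐ x ∂F, x ∈ stdSimplex ℝ Θ) ∧ (∫ x, x ∂F) = μ

section ValueFunction

variable {α : Type*} {P : α → Prop} {v D : α → ℝ} {W : ℝ → ℝ} {η : ℝ}

theorem exists_optimal_cost_eq
    (hatt : ∃ p, P p ∧ D p ≤ η ∧ v p = W η ∧ ∀ q, P q → D q ≤ η → v q ≤ W η)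
    (hbind : ∀ p, P p → D p ≤ η → (∀ q, P q → D q ≤ η → v q ≤ v p) → D p = η) :
    ∃ p, P p ∧ D p = η ∧ v p = W η := by
  obtain ⟨p, hp, hDp, hvp, hopt⟩ := hatt
  exact ⟨p, hp, hbind p hp hDp (fun q hq hDq => hvp ▸ hopt q hq hDq), hvp⟩

theorem value_lt_of_cost_lt
    (hatt : ∃ p, P p ∧ D p ≤ η ∧ v p = W η ∧ ∀ q, P q → D q ≤ η → v q ≤ W η)
    (hbind : ∀ p, P p → D p ≤ η → (∀ q, P q → D q ≤ η → v q ≤ v p) → D p = η)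
    {q : α} (hq : P q) (hDq : D q < η) : v q < W η := by
  obtain ⟨p, -, -, -, hopt⟩ := hatt
  refine (hopt q hq hDq.le).lt_of_ne fun hvq => hDq.ne ?_
  exact hbind q hq hDq.le fun r hr hDr => hvq ▸ hopt r hr hDr

theorem strictConcaveOn_of_binding_of_mix {s : Set ℝ} (hs : Convex ℝ s)
    (hatt : ∀ η ∈ s, ∃ p, P p ∧ D p ≤ η ∧ v p = W η ∧ ∀ q, P q → D q ≤ η → v q ≤ W η)
    (hbind : ∀ η ∈ s, ∀ p, P p → D p ≤ η → (∀ q, P q → D q ≤ η → v q ≤ v p) → D p = η)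
    (hmix : ∀ p₁ p₂, P p₁ → P p₂ → D p₁ ≠ D p₂ → ∀ a b : ℝ, 0 < a → 0 < b → a + b = 1 →
      ∃ p, P p ∧ v p = a * v p₁ + b * v p₂ ∧ D p < a * D p₁ + b * D p₂) :
    StrictConcaveOn ℝ s W := by
  refine ⟨hs, fun η₁ hη₁ η₂ hη₂ hne a b ha hb hab => ?_⟩
  obtain ⟨p₁, hp₁, hD₁, hv₁⟩ := exists_optimal_cost_eq (hatt η₁ hη₁) (hbind η₁ hη₁)
  obtain ⟨p₂, hp₂, hD₂, hv₂⟩ := exists_optimal_cost_eq (hatt η₂ hη₂) (hbind η₂ hη₂)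
  obtain ⟨p, hp, hvp, hDp⟩ := hmix p₁ p₂ hp₁ hp₂ (hD₁ ▸ hD₂ ▸ hne) a b ha hb hab
  have hη : a • η₁ + b • η₂ ∈ s := hs hη₁ hη₂ ha.le hb.le hab
  rw [hD₁, hD₂] at hDp
  rw [hv₁, hv₂] at hvp
  simpa only [smul_eq_mul, hvp] using value_lt_of_cost_lt (hatt _ hη) (hbind _ hη) hp hDp

end ValueFunction

section Mixture

variable {X : Type*} [MeasurableSpace X]

theorem integral_ofReal_smul_add_ofReal_smul {E : Type*} [NormedAddCommGroup E]
    [NormedSpace ℝ E] {F₁ F₂ : Measure X} {f : X → E} {a b : ℝ} (ha : 0 ≤ a) (hb : 0 ≤ b)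
    (h₁ : Integrable f F₁) (h₂ : Integrable f F₂) :
    ∫ x, f x ∂(ENNReal.ofReal a • F₁ + ENNReal.ofReal b • F₂)
      = a • ∫ x, f x ∂F₁ + b • ∫ x, f x ∂F₂ := by
  rw [integral_add_measure (h₁.smul_measure ENNReal.ofReal_ne_top)
      (h₂.smul_measure ENNReal.ofReal_ne_top), integral_smul_measure,
      integral_smul_measure, ENNReal.toReal_ofReal ha, ENNReal.toReal_ofReal hb]

theorem isProbabilityMeasure_ofReal_smul_add_ofReal_smul {F₁ F₂ : Measure X}
    [IsProbabilityMeasure F₁] [IsProbabilityMeasure F₂] {a b : ℝ} (ha : 0 ≤ a) (hb : 0 ≤ b)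
    (hab : a + b = 1) :
    IsProbabilityMeasure (ENNReal.ofReal a • F₁ + ENNReal.ofReal b • F₂) := by
  constructor
  simp [Measure.add_apply, ← ENNReal.ofReal_add ha hb, hab]

end Mixture

theorem integrable_id_of_ae_mem_stdSimplex {Θ : Type*} [Fintype Θ] {F : Measure (Θ → ℝ)}
    [IsFiniteMeasure F] (hF : ∀ᵐ x ∂F, x ∈ stdSimplex ℝ Θ) :
    Integrable (fun x : Θ → ℝ => x) F := by
  obtain ⟨C, hC⟩ := isBounded_iff_forall_norm_le.1 (isCompact_stdSimplex ℝ Θ).isBounded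
  exact (integrable_const C).mono' aestronglyMeasurable_id (hF.mono fun x hx => hC x hx)

theorem BayesPlausible.ofReal_smul_add_ofReal_smul {Θ : Type*} [Fintype Θ] {μ : Θ → ℝ}
    {F₁ F₂ : Measure (Θ → ℝ)} (h₁ : BayesPlausible μ F₁) (h₂ : BayesPlausible μ F₂)
    {a b : ℝ} (ha : 0 ≤ a) (hb : 0 ≤ b) (hab : a + b = 1) :
    BayesPlausible μ (ENNReal.ofReal a • F₁ + ENNReal.ofReal b • F₂) := by
  obtain ⟨_, hs₁, hμ₁⟩ := h₁
  obtain ⟨_, hs₂, hμ₂⟩ := h₂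
  refine ⟨isProbabilityMeasure_ofReal_smul_add_ofReal_smul ha hb hab, ?_, ?_⟩
  · rw [ae_add_measure_iff]
    exact ⟨Measure.ae_smul_measure hs₁ _, Measure.ae_smul_measure hs₂ _⟩
  · rw [integral_ofReal_smul_add_ofReal_smul ha hb (integrable_id_of_ae_mem_stdSimplex hs₁)
      (integrable_id_of_ae_mem_stdSimplex hs₂), hμ₁, hμ₂]
    exact Convex.combo_self hab μ

theorem stmt4_general {Θ : Type*} [Fintype Θ] (μ : Θ → ℝ)
    (V : (Θ → ℝ) → ℝ)
    (c : (Θ → ℝ) → (Θ → ℝ) → ℝ) (φ : ℝ → ℝ) (D : Measure (Θ → ℝ) → ℝ)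
    (hD : ∀ F, D F = φ (∫ x, c x μ ∂F))
    (hφconv : StrictConvexOn ℝ univ φ)
    (ηb : ℝ) (W : ℝ → ℝ)
    (hint : ∀ F, BayesPlausible μ F → Integrable V F ∧ Integrable (fun x => c x μ) F)
    (hatt : ∀ η ∈ Icc (0:ℝ) ηb, ∃ F, BayesPlausible μ F ∧ D F ≤ η ∧
      (∫ x, V x ∂F) = W η ∧
      ∀ G, BayesPlausible μ G → D G ≤ η → (∫ x, V x ∂G) ≤ W η)
    (hbind : ∀ η ∈ Icc (0:ℝ) ηb, ∀ F, BayesPlausible μ F → D F ≤ η →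
      (∀ G, BayesPlausible μ G → D G ≤ η → (∫ x, V x ∂G) ≤ ∫ x, V x ∂F) → D F = η) :
    StrictConcaveOn ℝ (Icc 0 ηb) W := by
  refine strictConcaveOn_of_binding_of_mix (convex_Icc 0 ηb) hatt hbind ?_
  intro F₁ F₂ h₁ h₂ hne a b ha hb hab
  have integral_mix (f : (Θ → ℝ) → ℝ) (hf : ∀ F, BayesPlausible μ F → Integrable f F) :
      ∫ x, f x ∂(ENNReal.ofReal a • F₁ + ENNReal.ofReal b • F₂)
        = a * ∫ x, f x ∂F₁ + b * ∫ x, f x ∂F₂ :=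
    integral_ofReal_smul_add_ofReal_smul ha.le hb.le (hf F₁ h₁) (hf F₂ h₂)
  refine ⟨_, h₁.ofReal_smul_add_ofReal_smul h₂ ha.le hb.le hab,
    integral_mix V fun F hF => (hint F hF).1, ?_⟩
  have hne' : ∫ x, c x μ ∂F₁ ≠ ∫ x, c x μ ∂F₂ := fun h => hne (by rw [hD, hD, h])
  rw [hD, hD, hD, integral_mix _ fun F hF => (hint F hF).2]
  simpa only [smul_eq_mul] using hφconv.2 (mem_univ _) (mem_univ _) hne' ha hb hab

/-- Strict concavity of the efficient value of information: with `φ` strictly convex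
and the constraint binding at every `η`, `W` is strictly concave on `[0,ηb]`:
for `η₁ ≠ η₂` and `υ ∈ (0,1)`, `W(υη₁+(1−υ)η₂) > υW(η₁)+(1−υ)W(η₂)`. -/
theorem stmt4 {Θ : Type*} [Fintype Θ] (μ : Θ → ℝ) (hμ : μ ∈ stdSimplex ℝ Θ)
    (V : (Θ → ℝ) → ℝ) (hVc : Continuous V)
    (c : (Θ → ℝ) → (Θ → ℝ) → ℝ) (φ : ℝ → ℝ) (D : Measure (Θ → ℝ) → ℝ)
    (hD : ∀ F, D F = φ (∫ x, c x μ ∂F))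
    (hφconv : StrictConvexOn ℝ univ φ) (hφmono : StrictMono φ) (hφ0 : φ 0 = 0)
    (hc : StrictConvexOn ℝ (stdSimplex ℝ Θ) (fun x => c x μ)) (hc0 : c μ μ = 0)
    (ηb : ℝ) (hηb : 0 < ηb) (W : ℝ → ℝ)
    (hint : ∀ F, BayesPlausible μ F → Integrable V F ∧ Integrable (fun x => c x μ) F)
    (hatt : ∀ η ∈ Icc (0:ℝ) ηb, ∃ F, BayesPlausible μ F ∧ D F ≤ η ∧
      (∫ x, V x ∂F) = W η ∧
      ∀ G, BayesPlausible μ G → D G ≤ η → (∫ x, V x ∂G) ≤ W η)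
    (hbind : ∀ η ∈ Icc (0:ℝ) ηb, ∀ F, BayesPlausible μ F → D F ≤ η →
      (∀ G, BayesPlausible μ G → D G ≤ η → (∫ x, V x ∂G) ≤ ∫ x, V x ∂F) → D F = η)
    (hWmono : MonotoneOn W (Icc 0 ηb)) :
    StrictConcaveOn ℝ (Icc 0 ηb) W :=
  stmt4_general μ V c φ D hD hφconv ηb W hint hatt hbind
end

section
/- Binding constraint lemma: Let V : Δ(Θ) → ℝ be continuous, let F̄ be the Bayes-plausible distribution supported on the vertices of the simplex (full information), and suppose η̄ < D(F̄) and E_F[V] < E_{F̄}[V] for every feasible F with D(F) ≤ η̄. If F solves max{E_G[V] : G Bayes-plausible, D(G) ≤ η} for η ≤ η̄ and D(F) < η, then there exists λ* ∈ (0,1) with D(λ*F + (1−λ*)F̄) = η and E_{λ*F+(1−λ*)F̄}[V] > E_F[V], contradicting optimality; hence every optimizer satisfies D(F) = η. -/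
/-!
Along the segment `λ ↦ λ F + (1 - λ) F̄` the integral `∫ c(·, μ)` is affine in `λ`, so `D` is
continuous and, when `D F < η < D F̄`, the intermediate value theorem yields a mixture with
`D = η`. The value `E[V]` is affine in `λ` as well, hence strictly above `E_F[V]` for every
`λ < 1` because `E_F[V] < E_F̄[V]`; since the mixture is feasible, this contradicts optimality.
-/

open MeasureTheory Set

/-- The full-information distribution over posteriors: `F̄ = Σ_θ μ(θ) · δ_{e_θ}`,
supported on the vertices of the simplex. -/
noncomputable def fullInfo {Θ : Type*} [Fintype Θ] [DecidableEq Θ] (μ : Θ → ℝ) :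
    Measure (Θ → ℝ) :=
  ∑ θ : Θ, ENNReal.ofReal (μ θ) • Measure.dirac (Pi.single θ (1:ℝ))

section Mixture

variable {α : Type*} [MeasurableSpace α]

lemma Continuous.integrable_of_ae_mem_compact [TopologicalSpace α] [OpensMeasurableSpace α]
    {E : Type*} [NormedAddCommGroup E] [SecondCountableTopologyEither α E]
    {ν : Measure α} [IsFiniteMeasure ν] {K : Set α} (hK : IsCompact K) (hνK : ∀ᵐ x ∂ν, x ∈ K)
    {f : α → E} (hf : Continuous f) : Integrable f ν := by
  obtain ⟨C, hC⟩ := hK.exists_bound_of_continuousOn hf.continuousOn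
  exact (integrable_const C).mono' hf.aestronglyMeasurable (hνK.mono hC)

lemma integral_ofReal_smul_add_ofReal_smul_s6 {E : Type*} [NormedAddCommGroup E] [NormedSpace ℝ E]
    {ν₁ ν₂ : Measure α} {l : ℝ} (hl0 : 0 ≤ l) (hl1 : l ≤ 1) {f : α → E}
    (h₁ : Integrable f ν₁) (h₂ : Integrable f ν₂) :
    ∫ x, f x ∂(ENNReal.ofReal l • ν₁ + ENNReal.ofReal (1 - l) • ν₂)
      = l • ∫ x, f x ∂ν₁ + (1 - l) • ∫ x, f x ∂ν₂ := by
  rw [integral_add_measure (h₁.smul_measure ENNReal.ofReal_ne_top)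
    (h₂.smul_measure ENNReal.ofReal_ne_top), integral_smul_measure, integral_smul_measure,
    ENNReal.toReal_ofReal hl0, ENNReal.toReal_ofReal (sub_nonneg.2 hl1)]

lemma not_integrable_ofReal_smul_add_ofReal_smul {E : Type*} [NormedAddCommGroup E]
    {ν₁ ν₂ : Measure α} {l : ℝ} (hl0 : 0 < l) {f : α → E} (h₁ : ¬ Integrable f ν₁) :
    ¬ Integrable f (ENNReal.ofReal l • ν₁ + ENNReal.ofReal (1 - l) • ν₂) := fun h =>
  h₁ <| (integrable_smul_measure (ENNReal.ofReal_pos.2 hl0).ne' ENNReal.ofReal_ne_top).1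
    (integrable_add_measure.1 h).1

lemma isProbabilityMeasure_ofReal_smul_add_ofReal_smul_s6 {ν₁ ν₂ : Measure α}
    [IsProbabilityMeasure ν₁] [IsProbabilityMeasure ν₂] {l : ℝ} (hl0 : 0 ≤ l) (hl1 : l ≤ 1) :
    IsProbabilityMeasure (ENNReal.ofReal l • ν₁ + ENNReal.ofReal (1 - l) • ν₂) := by
  constructor
  simp only [Measure.coe_add, Pi.add_apply, Measure.smul_apply, measure_univ, smul_eq_mul,
    mul_one]
  rw [← ENNReal.ofReal_add hl0 (sub_nonneg.2 hl1), add_sub_cancel, ENNReal.ofReal_one]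

lemma exists_mem_Ioo_comp_integral_ofReal_smul_add_ofReal_smul_eq {ν₁ ν₂ : Measure α}
    {g : α → ℝ} (h₁ : Integrable g ν₁) (h₂ : Integrable g ν₂) {φ : ℝ → ℝ} (hφ : Continuous φ)
    {η : ℝ} (hη₁ : φ (∫ x, g x ∂ν₁) < η) (hη₂ : η < φ (∫ x, g x ∂ν₂)) :
    ∃ l ∈ Ioo (0 : ℝ) 1,
      φ (∫ x, g x ∂(ENNReal.ofReal l • ν₁ + ENNReal.ofReal (1 - l) • ν₂)) = η := by
  have hcont : ContinuousOn (fun l : ℝ => φ (l * ∫ x, g x ∂ν₁ + (1 - l) * ∫ x, g x ∂ν₂))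
      (Icc 0 1) := by fun_prop
  obtain ⟨l, hl, hlη⟩ := intermediate_value_Ioo' zero_le_one hcont (by simpa using ⟨hη₁, hη₂⟩)
  refine ⟨l, hl, ?_⟩
  rwa [integral_ofReal_smul_add_ofReal_smul_s6 hl.1.le hl.2.le h₁ h₂]

lemma integral_lt_integral_ofReal_smul_add_ofReal_smul {ν₁ ν₂ : Measure α} {f : α → ℝ}
    (h₁ : Integrable f ν₁) (h₂ : Integrable f ν₂) (hlt : ∫ x, f x ∂ν₁ < ∫ x, f x ∂ν₂) {l : ℝ}
    (hl : l ∈ Ico (0 : ℝ) 1) :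
    ∫ x, f x ∂ν₁ < ∫ x, f x ∂(ENNReal.ofReal l • ν₁ + ENNReal.ofReal (1 - l) • ν₂) := by
  rw [integral_ofReal_smul_add_ofReal_smul_s6 hl.1 hl.2.le h₁ h₂, smul_eq_mul, smul_eq_mul]
  nlinarith [hl.2]

end Mixture

section FullInfo

variable {Θ : Type*} [Fintype Θ] [DecidableEq Θ]

lemma integrable_fullInfo {E : Type*} [NormedAddCommGroup E] (μ : Θ → ℝ) (f : (Θ → ℝ) → E) :
    Integrable f (fullInfo μ) :=
  integrable_finsetSum_measure.2 fun _ _ =>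
    (integrable_dirac enorm_lt_top).smul_measure ENNReal.ofReal_ne_top

lemma integral_fullInfo {E : Type*} [NormedAddCommGroup E] [NormedSpace ℝ E] [CompleteSpace E]
    {μ : Θ → ℝ} (hμ : ∀ θ, 0 ≤ μ θ) (f : (Θ → ℝ) → E) :
    ∫ x, f x ∂(fullInfo μ) = ∑ θ, μ θ • f (Pi.single θ 1) := by
  rw [fullInfo, integral_finsetSum_measure fun _ _ =>
    (integrable_dirac enorm_lt_top).smul_measure ENNReal.ofReal_ne_top]
  refine Finset.sum_congr rfl fun θ _ => ?_
  rw [integral_smul_measure, integral_dirac, ENNReal.toReal_ofReal (hμ θ)]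

lemma isProbabilityMeasure_fullInfo {μ : Θ → ℝ} (hμ : μ ∈ stdSimplex ℝ Θ) :
    IsProbabilityMeasure (fullInfo μ) := by
  constructor
  simp only [fullInfo, Measure.coe_finsetSum, Finset.sum_apply, Measure.smul_apply,
    measure_univ, smul_eq_mul, mul_one]
  rw [← ENNReal.ofReal_sum_of_nonneg fun θ _ => hμ.1 θ, hμ.2, ENNReal.ofReal_one]

lemma ae_mem_stdSimplex_fullInfo (μ : Θ → ℝ) : ∀ᵐ x ∂(fullInfo μ), x ∈ stdSimplex ℝ Θ := by
  simp only [fullInfo, ae_iff, Measure.coe_finsetSum, Finset.sum_apply, Measure.smul_apply,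
    smul_eq_mul]
  refine Finset.sum_eq_zero fun θ _ => ?_
  simp [Measure.dirac_apply, single_mem_stdSimplex ℝ θ]

lemma bayesPlausible_fullInfo {μ : Θ → ℝ} (hμ : μ ∈ stdSimplex ℝ Θ) :
    BayesPlausible μ (fullInfo μ) := by
  refine ⟨isProbabilityMeasure_fullInfo hμ, ae_mem_stdSimplex_fullInfo μ, ?_⟩
  ext θ
  simp [integral_fullInfo hμ.1, Finset.sum_apply, Pi.single_apply]

end FullInfo

lemma BayesPlausible.integrable {Θ : Type*} [Fintype Θ] {μ : Θ → ℝ} {F : Measure (Θ → ℝ)}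
    (hF : BayesPlausible μ F) {E : Type*} [NormedAddCommGroup E] {f : (Θ → ℝ) → E}
    (hf : Continuous f) : Integrable f F :=
  have := hF.1
  hf.integrable_of_ae_mem_compact (isCompact_stdSimplex ℝ Θ) hF.2.1

lemma BayesPlausible.ofReal_smul_add_ofReal_smul_s6 {Θ : Type*} [Fintype Θ] {μ : Θ → ℝ}
    {ν₁ ν₂ : Measure (Θ → ℝ)} (h₁ : BayesPlausible μ ν₁) (h₂ : BayesPlausible μ ν₂) {l : ℝ}
    (hl0 : 0 ≤ l) (hl1 : l ≤ 1) :
    BayesPlausible μ (ENNReal.ofReal l • ν₁ + ENNReal.ofReal (1 - l) • ν₂) := by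
  have := h₁.1
  have := h₂.1
  refine ⟨isProbabilityMeasure_ofReal_smul_add_ofReal_smul_s6 hl0 hl1,
    ae_add_measure_iff.2 ⟨Measure.ae_smul_measure h₁.2.1 _, Measure.ae_smul_measure h₂.2.1 _⟩, ?_⟩
  rw [integral_ofReal_smul_add_ofReal_smul_s6 hl0 hl1 (h₁.integrable continuous_id')
    (h₂.integrable continuous_id'), h₁.2.2, h₂.2.2, ← add_smul, add_sub_cancel, one_smul]


theorem stmt6_general {Θ : Type*} [Fintype Θ] [DecidableEq Θ]
    (μ : Θ → ℝ) (hμ : μ ∈ stdSimplex ℝ Θ)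
    (V : (Θ → ℝ) → ℝ) (hVc : Continuous V)
    (c : (Θ → ℝ) → (Θ → ℝ) → ℝ) (φ : ℝ → ℝ) (D : Measure (Θ → ℝ) → ℝ)
    (hD : ∀ F, D F = φ (∫ x, c x μ ∂F))
    (hφcont : Continuous φ)
    (ηb η : ℝ) (hη : η ≤ ηb) (hηb : ηb < D (fullInfo μ))
    (hsub : ∀ G, BayesPlausible μ G → D G ≤ ηb →
      (∫ x, V x ∂G) < ∫ x, V x ∂(fullInfo μ))
    (F : Measure (Θ → ℝ)) (hF : BayesPlausible μ F) (hFfeas : D F ≤ η)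
    (hFopt : ∀ G, BayesPlausible μ G → D G ≤ η → (∫ x, V x ∂G) ≤ ∫ x, V x ∂F) :
    (D F < η → ∃ l ∈ Ioo (0:ℝ) 1,
      D (ENNReal.ofReal l • F + ENNReal.ofReal (1 - l) • fullInfo μ) = η ∧
      (∫ x, V x ∂F) <
        ∫ x, V x ∂(ENNReal.ofReal l • F + ENNReal.ofReal (1 - l) • fullInfo μ)) ∧
    D F = η := by
  have hmix : ∀ l ∈ Ioo (0 : ℝ) 1,
      BayesPlausible μ (ENNReal.ofReal l • F + ENNReal.ofReal (1 - l) • fullInfo μ) :=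
    fun l hl => hF.ofReal_smul_add_ofReal_smul_s6 (bayesPlausible_fullInfo hμ) hl.1.le hl.2.le
  have hgain : ∀ l ∈ Ioo (0 : ℝ) 1, (∫ x, V x ∂F) <
      ∫ x, V x ∂(ENNReal.ofReal l • F + ENNReal.ofReal (1 - l) • fullInfo μ) :=
    fun l hl => integral_lt_integral_ofReal_smul_add_ofReal_smul (hF.integrable hVc)
      (integrable_fullInfo μ V) (hsub F hF (hFfeas.trans hη)) (Ioo_subset_Ico_self hl)
  -- Otherwise `D` takes the junk value `φ 0` on `F` and on every mixture, so mixing costs nothing.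
  have hc : Integrable (fun x => c x μ) F := by
    by_contra hc
    have hhalf : (1 / 2 : ℝ) ∈ Ioo 0 1 := by norm_num
    have hDhalf : D (ENNReal.ofReal (1 / 2) • F + ENNReal.ofReal (1 - 1 / 2) • fullInfo μ)
        = D F := by
      rw [hD, hD, integral_undef (not_integrable_ofReal_smul_add_ofReal_smul hhalf.1 hc),
        integral_undef hc]
    exact (hgain _ hhalf).not_ge (hFopt _ (hmix _ hhalf) (hDhalf ▸ hFfeas))
  have hbind : D F < η → ∃ l ∈ Ioo (0:ℝ) 1,
      D (ENNReal.ofReal l • F + ENNReal.ofReal (1 - l) • fullInfo μ) = η ∧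
      (∫ x, V x ∂F) <
        ∫ x, V x ∂(ENNReal.ofReal l • F + ENNReal.ofReal (1 - l) • fullInfo μ) := fun hlt => by
    obtain ⟨l, hl, hDl⟩ := exists_mem_Ioo_comp_integral_ofReal_smul_add_ofReal_smul_eq hc
      (integrable_fullInfo μ _) hφcont (hD F ▸ hlt) (hD _ ▸ hη.trans_lt hηb)
    exact ⟨l, hl, (hD _).trans hDl, hgain l hl⟩
  refine ⟨hbind, hFfeas.eq_of_not_lt fun hlt => ?_⟩
  obtain ⟨l, hl, hDl, hVl⟩ := hbind hlt
  exact (hFopt _ (hmix l hl) hDl.le).not_gt hVl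

/-- Binding-constraint lemma: if `F` solves `max {E_G[V] : D(G) ≤ η}` with `D(F) < η`,
then mixing `F` with the full-information distribution `F̄` produces, for some
`λ* ∈ (0,1)`, a feasible distribution with `D = η` and a strictly higher value,
contradicting optimality; hence every optimizer satisfies `D(F) = η`. -/
theorem stmt6 {Θ : Type*} [Fintype Θ] [DecidableEq Θ]
    (μ : Θ → ℝ) (hμ : μ ∈ stdSimplex ℝ Θ) (hμpos : ∀ θ, 0 < μ θ)
    (V : (Θ → ℝ) → ℝ) (hVc : Continuous V)
    (c : (Θ → ℝ) → (Θ → ℝ) → ℝ) (φ : ℝ → ℝ) (D : Measure (Θ → ℝ) → ℝ)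
    (hD : ∀ F, D F = φ (∫ x, c x μ ∂F))
    (hφcont : Continuous φ) (hφconv : ConvexOn ℝ univ φ) (hφmono : StrictMono φ)
    (hφ0 : φ 0 = 0)
    (hc : StrictConvexOn ℝ (stdSimplex ℝ Θ) (fun x => c x μ)) (hc0 : c μ μ = 0)
    (ηb η : ℝ) (hη : η ≤ ηb) (hηb : ηb < D (fullInfo μ))
    (hsub : ∀ G, BayesPlausible μ G → D G ≤ ηb →
      (∫ x, V x ∂G) < ∫ x, V x ∂(fullInfo μ))
    (F : Measure (Θ → ℝ)) (hF : BayesPlausible μ F) (hFfeas : D F ≤ η)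
    (hFopt : ∀ G, BayesPlausible μ G → D G ≤ η → (∫ x, V x ∂G) ≤ ∫ x, V x ∂F) :
    (D F < η → ∃ l ∈ Ioo (0:ℝ) 1,
      D (ENNReal.ofReal l • F + ENNReal.ofReal (1 - l) • fullInfo μ) = η ∧
      (∫ x, V x ∂F) <
        ∫ x, V x ∂(ENNReal.ofReal l • F + ENNReal.ofReal (1 - l) • fullInfo μ)) ∧
    D F = η :=
  stmt6_general μ hμ V hVc c φ D hD hφcont ηb η hη hηb hsub F hF hFfeas hFopt
end
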